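/- arXiv:2008.09052 — 6 statements merged into one kernel-verified Lean document; each statement's English description precedes it below -/
import Mathlib

section
/- An affine map A: ℝⁿ → ℝⁿ given by A(x) = Wx + b is invertible if and only if the associated arrangement of solution sets S_i = {x : W_i · x + b_i = 0} (one for each row i of W) is generic, i.e., every k-fold intersection of distinct solution sets is an affine subspace of dimension n - k (with negative dimension meaning empty). -/
open Matrix

/-- An affine map `A(x) = Wx + b` on `ℝⁿ` is invertible iff the
arrangement of solution sets `Sᵢ = {x | Wᵢ ⬝ x + bᵢ = 0}` is generic, i.e. every
`k`-fold intersection of distinct solution sets is a nonempty affine subspace of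
dimension `n - k`. -/
theorem invertible_iff_generic {n : ℕ} (W : Matrix (Fin n) (Fin n) ℝ) (b : Fin n → ℝ)
    (S : Fin n → Set (Fin n → ℝ))
    (hS : ∀ i, S i = {x : Fin n → ℝ | W i ⬝ᵥ x + b i = 0}) :
    Function.Bijective (fun x : Fin n → ℝ => W.mulVec x + b) ↔
      (∀ s : Finset (Fin n), ∃ E : AffineSubspace ℝ (Fin n → ℝ),
        (E : Set (Fin n → ℝ)) = ⋂ i ∈ s, S i ∧
        (E : Set (Fin n → ℝ)).Nonempty ∧
        Module.finrank ℝ E.direction = n - s.card) := by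
  have hA : Function.Bijective (fun x : Fin n → ℝ => W.mulVec x + b) ↔
      Function.Bijective W.mulVec := by
    have : (fun x : Fin n → ℝ => W.mulVec x + b) = (Equiv.addRight b) ∘ W.mulVec := rfl
    rw [this, Equiv.comp_bijective]
  rw [hA]
  constructor
  · intro hW s
    -- choose x₀ with W x₀ = -b
    obtain ⟨x₀, hx₀⟩ := hW.surjective (-b)
    set L : (Fin n → ℝ) →ₗ[ℝ] ({i // i ∈ s} → ℝ) :=
      (LinearMap.funLeft ℝ ℝ Subtype.val).comp W.mulVecLin with hL
    have hLsurj : Function.Surjective L := by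
      exact (LinearMap.funLeft_surjective_of_injective ℝ ℝ _ Subtype.val_injective).comp hW.surjective
    refine ⟨AffineSubspace.mk' x₀ (LinearMap.ker L), ?_, ?_, ?_⟩
    · ext x
      simp only [AffineSubspace.mem_coe, AffineSubspace.mem_mk', LinearMap.mem_ker,
        Set.mem_iInter]
      constructor
      · intro h i hi
        rw [hS i]
        have := congrFun h ⟨i, hi⟩
        simp only [hL, LinearMap.comp_apply, LinearMap.funLeft_apply, mulVecLin_apply,
          Pi.zero_apply] at this
        have h2 : W.mulVec (x - x₀) i = 0 := this
        rw [mulVec_sub] at h2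
        have h3 : W.mulVec x i = W.mulVec x₀ i := by
          have := h2
          simp only [Pi.sub_apply] at this
          linarith
        simp only [Set.mem_setOf_eq]
        have : W.mulVec x₀ i = -b i := congrFun hx₀ i
        show W i ⬝ᵥ x + b i = 0
        calc W i ⬝ᵥ x + b i = W.mulVec x i + b i := rfl
          _ = W.mulVec x₀ i + b i := by rw [h3]
          _ = -b i + b i := by rw [this]
          _ = 0 := by ring
      · intro h
        funext i
        have hi := h i.1 i.2
        rw [hS i.1] at hi
        simp only [Set.mem_setOf_eq] at hi
        have hb : W.mulVec x₀ i.1 = -b i.1 := congrFun hx₀ i.1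
        show W.mulVec (x - x₀) i.1 = 0
        rw [mulVec_sub]
        have : W.mulVec x i.1 = -b i.1 := by
          have h' : W.mulVec x i.1 + b i.1 = 0 := hi
          linarith
        simp [Pi.sub_apply, this, hb]
    · exact ⟨x₀, AffineSubspace.self_mem_mk' _ _⟩
    · rw [AffineSubspace.direction_mk']
      have hrn := LinearMap.finrank_range_add_finrank_ker L
      rw [LinearMap.range_eq_top.mpr hLsurj] at hrn
      have : Module.finrank ℝ (⊤ : Submodule ℝ ({i // i ∈ s} → ℝ)) = s.card := by
        rw [finrank_top, Module.finrank_pi, Fintype.card_coe]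
      rw [this, Module.finrank_pi, Fintype.card_fin] at hrn
      omega
  · intro h
    obtain ⟨E, hE, ⟨x₀, hx₀⟩, hdim⟩ := h Finset.univ
    rw [Finset.card_univ, Fintype.card_fin, Nat.sub_self] at hdim
    have hEbot : E.direction = ⊥ := Submodule.finrank_eq_zero.mp hdim
    have hx₀E : W.mulVec x₀ = -b := by
      have := hE ▸ hx₀
      simp only [Set.mem_iInter] at this
      funext i
      have hi := this i (Finset.mem_univ i)
      rw [hS i] at hi
      simp only [Set.mem_setOf_eq] at hi
      have : W i ⬝ᵥ x₀ + b i = 0 := hi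
      show W.mulVec x₀ i = -b i
      simp only [mulVec]
      linarith
    have hker : ∀ v, W.mulVec v = 0 → v = 0 := by
      intro v hv
      have hmem : x₀ + v ∈ (E : Set (Fin n → ℝ)) := by
        rw [hE]
        simp only [Set.mem_iInter]
        intro i hi
        rw [hS i]
        simp only [Set.mem_setOf_eq]
        have h1 : W.mulVec (x₀ + v) = -b := by rw [mulVec_add, hv, add_zero, hx₀E]
        have h2 : W i ⬝ᵥ (x₀ + v) = -b i := congrFun h1 i
        show W i ⬝ᵥ (x₀ + v) + b i = 0
        rw [h2]; ring
      have hsub : (x₀ + v) -ᵥ x₀ ∈ E.direction :=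
        AffineSubspace.vsub_mem_direction hmem hx₀
      rw [hEbot] at hsub
      simpa using hsub
    have hinj : Function.Injective W.mulVec := by
      rw [← Matrix.mulVecLin_apply] at *
      have : LinearMap.ker W.mulVecLin = ⊥ := by
        rw [LinearMap.ker_eq_bot']
        intro v hv
        exact hker v hv
      exact (LinearMap.ker_eq_bot.mp this)
    exact ⟨hinj, LinearMap.surjective_of_injective (f := W.mulVecLin) hinj⟩
end

section
/- A generic arrangement of k ≤ n affine hyperplanes in ℝⁿ has exactly 2^k regions (connected components of the complement), and these regions are in one-to-one correspondence with binary k-tuples recording on which side of each co-oriented hyperplane the region lies. -/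
open Function Matrix Module Set

/-!
Collect the `k` affine functionals into one affine map `A : ℝⁿ → ℝᵏ`, `A x = (w i ⬝ᵥ x + b i)ᵢ`.
The complement of the arrangement is the preimage of the coordinate-free part of `ℝᵏ`, which
the open orthants partition, so the regions `R θ` are the preimages of the orthants: open,
convex and pairwise disjoint, hence exactly the connected components of the complement.
Genericity for all `k` hyperplanes at once says the common zero set of `A` has codimension `k`,
so the linear part of `A` has rank `k` and `A` is onto; thus every orthant, and so every
region, is nonempty, and there are `2 ^ k` of them.
-/

section Orthant

variable {ι : Type*}

def orthant (θ : ι → Bool) : Set (ι → ℝ) :=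
  {y | ∀ i, if θ i then 0 < y i else y i < 0}

theorem isOpen_orthant [Finite ι] (θ : ι → Bool) : IsOpen (orthant θ) := by
  simp only [orthant, ofPred_forall]
  refine isOpen_iInter_of_finite fun i => ?_
  cases θ i
  · exact isOpen_lt (continuous_apply i) continuous_const
  · exact isOpen_lt continuous_const (continuous_apply i)

theorem convex_orthant (θ : ι → Bool) : Convex ℝ (orthant θ) := by
  simp only [orthant, ofPred_forall]
  refine convex_iInter fun i => ?_
  cases θ i
  · exact convex_halfSpace_lt (LinearMap.proj (R := ℝ) i).isLinear 0
  · exact convex_halfSpace_gt (LinearMap.proj (R := ℝ) i).isLinear 0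

theorem orthant_nonempty (θ : ι → Bool) : (orthant θ).Nonempty :=
  ⟨fun i => if θ i then 1 else -1, fun i => by cases hθ : θ i <;> simp [hθ]⟩

theorem pairwise_disjoint_orthant :
    Pairwise (Disjoint on (orthant : (ι → Bool) → Set (ι → ℝ))) := by
  intro θ θ' hne
  refine disjoint_left.2 fun y hy hy' => hne (funext fun i => ?_)
  have h := hy i
  have h' := hy' i
  cases hθ : θ i <;> cases hθ' : θ' i <;> simp [hθ, hθ'] at h h' ⊢ <;> linarith

theorem iUnion_orthant : ⋃ θ : ι → Bool, orthant θ = {y : ι → ℝ | ∀ i, y i ≠ 0} := by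
  ext y
  simp only [mem_iUnion, mem_ofPred_eq]
  constructor
  · rintro ⟨θ, hy⟩ i
    have h := hy i
    cases hθ : θ i <;> simp only [hθ] at h
    exacts [h.ne, h.ne']
  · intro hy
    refine ⟨fun i => decide (0 < y i), fun i => ?_⟩
    by_cases h : 0 < y i
    · simp [h]
    · simpa [h] using lt_of_le_of_ne (not_lt.1 h) (hy i)

end Orthant

theorem injective_of_pairwise_disjoint {X α : Type*} {S : α → Set X}
    (hdisj : Pairwise (Disjoint on S)) (hne : ∀ a, (S a).Nonempty) : Injective S := by
  intro a a' h
  by_contra hne'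
  obtain ⟨x, hx⟩ := hne a
  exact disjoint_left.1 (hdisj hne') hx (h ▸ hx)

section Partition

variable {X α : Type*} [TopologicalSpace X] {F : Set X} {S : α → Set X}

theorem connectedComponentIn_eq_of_iUnion_eq (hopen : ∀ a, IsOpen (S a))
    (hconn : ∀ a, IsPreconnected (S a)) (hdisj : Pairwise (Disjoint on S)) (hF : ⋃ a, S a = F)
    {a : α} {x : X} (hx : x ∈ S a) :
    connectedComponentIn F x = S a := by
  have hSF : S a ⊆ F := hF ▸ subset_iUnion S a
  refine Subset.antisymm ?_ ((hconn a).subset_connectedComponentIn hx hSF)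
  have hcover : connectedComponentIn F x ⊆ S a ∪ ⋃ b ∈ ({a}ᶜ : Set α), S b := by
    intro y hy
    obtain ⟨b, hb⟩ := mem_iUnion.1 (hF ▸ connectedComponentIn_subset F x hy)
    by_cases hba : b = a
    · exact Or.inl (hba ▸ hb)
    · exact Or.inr (mem_biUnion hba hb)
  refine isPreconnected_connectedComponentIn.subset_left_of_subset_union (hopen a)
    (isOpen_biUnion fun b _ => hopen b) ?_ hcover ⟨x, mem_connectedComponentIn (hSF hx), hx⟩
  exact disjoint_iUnion₂_right.2 fun b hb => hdisj (Ne.symm hb)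

theorem setOf_connectedComponentIn_eq_range (hopen : ∀ a, IsOpen (S a))
    (hconn : ∀ a, IsPreconnected (S a)) (hdisj : Pairwise (Disjoint on S)) (hF : ⋃ a, S a = F)
    (hne : ∀ a, (S a).Nonempty) :
    {C | ∃ x ∈ F, C = connectedComponentIn F x} = range S := by
  ext C
  constructor
  · rintro ⟨x, hx, rfl⟩
    obtain ⟨a, ha⟩ := mem_iUnion.1 (hF ▸ hx)
    exact ⟨a, (connectedComponentIn_eq_of_iUnion_eq hopen hconn hdisj hF ha).symm⟩
  · rintro ⟨a, rfl⟩
    obtain ⟨x, hx⟩ := hne a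
    exact ⟨x, hF ▸ mem_iUnion_of_mem a hx,
      (connectedComponentIn_eq_of_iUnion_eq hopen hconn hdisj hF hx).symm⟩

end Partition

theorem AffineMap.surjective_of_finrank_direction {K V W : Type*} [Field K] [AddCommGroup V]
    [Module K V] [FiniteDimensional K V] [AddCommGroup W] [Module K W] [FiniteDimensional K W]
    (A : V →ᵃ[K] W) (E : AffineSubspace K V) (hE : (E : Set V) = A ⁻¹' {0})
    (hne : (E : Set V).Nonempty)
    (hdim : finrank K E.direction + finrank K W = finrank K V) : Surjective A := by
  obtain ⟨p, hp⟩ := hne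
  have hAp : A p = 0 := by simpa [hE] using hp
  have hEker : E = AffineSubspace.mk' p (LinearMap.ker A.linear) := by
    refine SetLike.coe_injective (Set.ext fun x => ?_)
    rw [hE, SetLike.mem_coe, AffineSubspace.mem_mk', LinearMap.mem_ker, A.linearMap_vsub, hAp]
    simp
  rw [hEker, AffineSubspace.direction_mk'] at hdim
  have hrange : LinearMap.range A.linear = ⊤ := by
    apply Submodule.eq_top_of_finrank_eq
    have := LinearMap.finrank_range_add_finrank_ker A.linear
    omega
  intro y
  obtain ⟨v, hv⟩ := LinearMap.range_eq_top.1 hrange (y -ᵥ A p)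
  exact ⟨v +ᵥ p, by rw [A.map_vadd, hv, vsub_vadd]⟩

theorem generic_arrangement_regions_general {n k : ℕ} (hkn : k ≤ n)
    (w : Fin k → (Fin n → ℝ)) (b : Fin k → ℝ)
    (hgen : ∀ s : Finset (Fin k), ∃ E : AffineSubspace ℝ (Fin n → ℝ),
      (E : Set (Fin n → ℝ)) = ⋂ i ∈ s, {x : Fin n → ℝ | w i ⬝ᵥ x + b i = 0} ∧
      (E : Set (Fin n → ℝ)).Nonempty ∧
      Module.finrank ℝ E.direction = n - s.card)
    (comp : Set (Fin n → ℝ)) (hcomp : comp = {x | ∀ i, w i ⬝ᵥ x + b i ≠ 0})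
    (R : (Fin k → Bool) → Set (Fin n → ℝ))
    (hR : ∀ θ, R θ = {x | ∀ i, if θ i then 0 < w i ⬝ᵥ x + b i else w i ⬝ᵥ x + b i < 0}) :
    (∀ θ, (R θ).Nonempty) ∧
    (∀ θ, ∀ x ∈ R θ, connectedComponentIn comp x = R θ) ∧
    (∀ x ∈ comp, ∃ θ, x ∈ R θ) ∧
    Function.Injective R ∧
    {C : Set (Fin n → ℝ) | ∃ x ∈ comp, C = connectedComponentIn comp x}.ncard = 2 ^ k := by
  let A : (Fin n → ℝ) →ᵃ[ℝ] (Fin k → ℝ) := (of w).mulVecLin.toAffineMap + AffineMap.const ℝ _ b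
  have hRA : R = fun θ => A ⁻¹' orthant θ := funext fun θ => hR θ
  have hcompA : comp = A ⁻¹' {y | ∀ i, y i ≠ 0} := hcomp
  have hsurj : Surjective A := by
    obtain ⟨E, hE, hne, hdim⟩ := hgen Finset.univ
    refine A.surjective_of_finrank_direction E ?_ hne ?_
    · rw [hE]
      ext x
      simp [A, funext_iff, mulVec, dotProduct]
    · rw [hdim, finrank_fin_fun, finrank_fin_fun, Finset.card_univ, Fintype.card_fin]
      omega
  have hcont : Continuous A := A.continuous_of_finiteDimensional
  have hopen θ : IsOpen (R θ) := hRA ▸ (isOpen_orthant θ).preimage hcont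
  have hconn θ : IsPreconnected (R θ) :=
    hRA ▸ ((convex_orthant θ).affine_preimage A).isPreconnected
  have hdisj : Pairwise (Disjoint on R) := by
    rw [hRA]
    exact fun θ θ' h => (pairwise_disjoint_orthant h).preimage A
  have hunion : ⋃ θ, R θ = comp := by rw [hRA, hcompA, ← iUnion_orthant, preimage_iUnion]
  have hne θ : (R θ).Nonempty := hRA ▸ (orthant_nonempty θ).preimage hsurj
  refine ⟨hne, fun θ x hx => connectedComponentIn_eq_of_iUnion_eq hopen hconn hdisj hunion hx,
    fun x hx => mem_iUnion.1 (hunion ▸ hx), injective_of_pairwise_disjoint hdisj hne, ?_⟩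
  rw [setOf_connectedComponentIn_eq_range hopen hconn hdisj hunion hne,
    ncard_range_of_injective (injective_of_pairwise_disjoint hdisj hne)]
  simp

/-- A generic arrangement of `k ≤ n` co-oriented affine hyperplanes in `ℝⁿ`
has exactly `2^k` regions, in one-to-one correspondence with binary `k`-tuples recording
the side of each hyperplane: every sign pattern `θ` occurs as a nonempty region `R θ`,
each `R θ` is a connected component of the complement, every point of the complement lies
in some `R θ`, the labeling is injective, and there are `2^k` regions. -/
theorem generic_arrangement_regions {n k : ℕ} (hkn : k ≤ n)
    (w : Fin k → (Fin n → ℝ)) (b : Fin k → ℝ) (hw : ∀ i, w i ≠ 0)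
    (hgen : ∀ s : Finset (Fin k), ∃ E : AffineSubspace ℝ (Fin n → ℝ),
      (E : Set (Fin n → ℝ)) = ⋂ i ∈ s, {x : Fin n → ℝ | w i ⬝ᵥ x + b i = 0} ∧
      (E : Set (Fin n → ℝ)).Nonempty ∧
      Module.finrank ℝ E.direction = n - s.card)
    (comp : Set (Fin n → ℝ)) (hcomp : comp = {x | ∀ i, w i ⬝ᵥ x + b i ≠ 0})
    (R : (Fin k → Bool) → Set (Fin n → ℝ))
    (hR : ∀ θ, R θ = {x | ∀ i, if θ i then 0 < w i ⬝ᵥ x + b i else w i ⬝ᵥ x + b i < 0}) :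
    (∀ θ, (R θ).Nonempty) ∧
    (∀ θ, ∀ x ∈ R θ, connectedComponentIn comp x = R θ) ∧
    (∀ x ∈ comp, ∃ θ, x ∈ R θ) ∧
    Function.Injective R ∧
    {C : Set (Fin n → ℝ) | ∃ x ∈ comp, C = connectedComponentIn comp x}.ncard = 2 ^ k :=
  generic_arrangement_regions_general hkn w b hgen comp hcomp R hR
end

section
/- Let F: ℝⁿ → ℝ be continuous and affine linear on cells of a finite polyhedral decomposition M of ℝⁿ, and let t be a transversal threshold for F and M. Then the level set F⁻¹({t}) equals the topological boundary of the sublevel set F⁻¹((−∞,t)) and also equals the topological boundary of the superlevel set F⁻¹((t,∞)). -/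
/-!
Let `p` lie on the level set. Among the finitely many cells through `p` take a minimal one, `R`;
since cells meet in common faces and faces of cells are cells, every face of `R` through `p` is
all of `R`. Hence a constraint of `R` that is active at `p` is active on all of `R`, so `p` is
relatively interior: for every `q ∈ R` the line through `p` and `q` stays in `R` near `p`.
Transversality provides `q ∈ R` with `F q ≠ F p`, and along that line `F` is affine with nonzero
slope, so it takes values on both sides of `t` arbitrarily close to `p`. The reverse inclusions
hold for any continuous `F`.
-/

open Matrix

/-- A polyhedral set in `ℝⁿ`: a finite intersection of closed affine half-spaces. -/
def IsPolyhedral {n : ℕ} (S : Set (Fin n → ℝ)) : Prop :=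
  ∃ (k : ℕ) (w : Fin k → (Fin n → ℝ)) (c : Fin k → ℝ),
    S = {x | ∀ j, c j ≤ w j ⬝ᵥ x}

/-- `Q` is a face of `P`: either `P` itself or the intersection of `P` with a supporting
hyperplane (this includes the empty face). -/
def IsFaceOf {n : ℕ} (Q P : Set (Fin n → ℝ)) : Prop :=
  Q = P ∨ ∃ (v : Fin n → ℝ) (c : ℝ),
    (∀ x ∈ P, v ⬝ᵥ x ≤ c) ∧ Q = P ∩ {x | v ⬝ᵥ x = c}

/-- A finite polyhedral complex: a finite collection of polyhedral sets closed under
taking faces, in which any two cells intersect in a common face. -/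
def IsPolyhedralComplex {n : ℕ} (𝒞 : Set (Set (Fin n → ℝ))) : Prop :=
  𝒞.Finite ∧ (∀ P ∈ 𝒞, IsPolyhedral P) ∧
  (∀ P ∈ 𝒞, ∀ Q, IsFaceOf Q P → Q ∈ 𝒞) ∧
  (∀ P ∈ 𝒞, ∀ Q ∈ 𝒞, IsFaceOf (P ∩ Q) P ∧ IsFaceOf (P ∩ Q) Q)

/-- `F` restricted to each cell of `𝒞` is an affine map. -/
def AffineOnCells {n : ℕ} (F : (Fin n → ℝ) → ℝ) (𝒞 : Set (Set (Fin n → ℝ))) : Prop :=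
  ∀ P ∈ 𝒞, ∃ (w : Fin n → ℝ) (c : ℝ), ∀ x ∈ P, F x = w ⬝ᵥ x + c

/-- The threshold `t` is transversal for `F` and the complex `𝒞`: every point of
`F⁻¹({t})` has an `F`-nonconstant cellular neighborhood, i.e. `F` is nonconstant on
every cell containing the point. -/
def TransversalThreshold {n : ℕ} (F : (Fin n → ℝ) → ℝ)
    (𝒞 : Set (Set (Fin n → ℝ))) (t : ℝ) : Prop :=
  ∀ p : Fin n → ℝ, F p = t → ∀ P ∈ 𝒞, p ∈ P → ∃ x ∈ P, ∃ y ∈ P, F x ≠ F y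

open Set Filter Topology

lemma IsPolyhedralComplex.exists_minimal_cell {n : ℕ} {𝒞 : Set (Set (Fin n → ℝ))}
    (h𝒞 : IsPolyhedralComplex 𝒞) {p : Fin n → ℝ} (hp : p ∈ ⋃₀ 𝒞) :
    ∃ R ∈ 𝒞, p ∈ R ∧ ∀ P ∈ 𝒞, p ∈ P → R ⊆ P := by
  obtain ⟨R, ⟨hR, hpR⟩, hmin⟩ :=
    (h𝒞.1.subset (sep_subset 𝒞 (p ∈ ·))).exists_minimal hp
  refine ⟨R, hR, hpR, fun P hP hpP => ?_⟩
  have hRP : R ∩ P ∈ 𝒞 := h𝒞.2.2.1 R hR _ (h𝒞.2.2.2 R hR P hP).1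
  exact (hmin ⟨hRP, hpR, hpP⟩ inter_subset_left).trans inter_subset_right

lemma IsPolyhedral.eventually_add_smul_sub_mem {n : ℕ} {R : Set (Fin n → ℝ)}
    (hR : IsPolyhedral R) {p q : Fin n → ℝ} (hp : p ∈ R) (hq : q ∈ R)
    (hface : ∀ Q, IsFaceOf Q R → p ∈ Q → R ⊆ Q) :
    ∀ᶠ s in 𝓝 (0 : ℝ), p + s • (q - p) ∈ R := by
  obtain ⟨k, w, c, rfl⟩ := hR
  refine eventually_all.2 fun j => ?_
  rcases (hp j).eq_or_lt with hactive | hslack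
  · have hface_j : IsFaceOf ({x | ∀ j, c j ≤ w j ⬝ᵥ x} ∩ {x | -w j ⬝ᵥ x = -c j})
        {x | ∀ j, c j ≤ w j ⬝ᵥ x} :=
      Or.inr ⟨-w j, -c j, fun x hx => by simpa [neg_dotProduct] using hx j, rfl⟩
    have hqj : w j ⬝ᵥ q = c j := by
      simpa [neg_dotProduct] using (hface _ hface_j ⟨hp, by simp [neg_dotProduct, hactive]⟩ hq).2
    refine Eventually.of_forall fun s => le_of_eq ?_
    simp only [dotProduct_add, dotProduct_smul, dotProduct_sub, smul_eq_mul, hqj, ← hactive]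
    ring
  · have hcont : Continuous fun s : ℝ => w j ⬝ᵥ (p + s • (q - p)) := by fun_prop
    have hev := (hcont.tendsto 0).eventually (eventually_gt_nhds (by simpa using hslack))
    exact hev.mono fun s hs => hs.le

lemma mem_closure_lt_and_gt_of_eventually_affine_on_line {E : Type*} [TopologicalSpace E]
    [AddCommGroup E] [Module ℝ E] [ContinuousAdd E] [ContinuousSMul ℝ E] {F : E → ℝ}
    {p v : E} {d : ℝ} (hd : d ≠ 0) (hF : ∀ᶠ s in 𝓝 (0 : ℝ), F (p + s • v) = F p + s * d) :
    p ∈ closure {x | F x < F p} ∧ p ∈ closure {x | F p < F x} := by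
  -- reparametrize by the value `u = s * d`, so that `F - F p` is the identity near `u = 0`
  set φ : ℝ → E := fun u => p + (u / d) • v
  have hφ : Tendsto φ (𝓝 0) (𝓝 p) := by
    have : Continuous φ := by fun_prop
    simpa [φ] using this.tendsto 0
  have hdiv : Tendsto (· / d) (𝓝 (0 : ℝ)) (𝓝 0) := by
    simpa using (continuous_id.div_const d).tendsto (0 : ℝ)
  have hFφ : ∀ᶠ u in 𝓝 (0 : ℝ), F (φ u) = F p + u :=
    (hdiv.eventually hF).mono fun u hu => by rw [hu, div_mul_cancel₀ u hd]
  rw [mem_closure_iff_frequently, mem_closure_iff_frequently]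
  constructor
  · exact hφ.frequently ((hFφ.and_frequently (frequently_lt_nhds 0)).mono
      fun u ⟨hu, hneg⟩ => show F (φ u) < F p by linarith)
  · exact hφ.frequently ((hFφ.and_frequently (frequently_gt_nhds 0)).mono
      fun u ⟨hu, hpos⟩ => show F p < F (φ u) by linarith)

lemma mem_closure_lt_and_gt_of_transversalThreshold {n : ℕ} {𝒞 : Set (Set (Fin n → ℝ))}
    (h𝒞 : IsPolyhedralComplex 𝒞) {F : (Fin n → ℝ) → ℝ} (haff : AffineOnCells F 𝒞)
    {p : Fin n → ℝ} (hp : p ∈ ⋃₀ 𝒞) (ht : TransversalThreshold F 𝒞 (F p)) :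
    p ∈ closure {x | F x < F p} ∧ p ∈ closure {x | F p < F x} := by
  obtain ⟨R, hR, hpR, hmin⟩ := h𝒞.exists_minimal_cell hp
  obtain ⟨q, hq, hqp⟩ : ∃ q ∈ R, F q ≠ F p := by
    obtain ⟨x, hx, y, hy, hxy⟩ := ht p rfl R hR hpR
    by_cases hxp : F x = F p
    · exact ⟨y, hy, fun hyp => hxy (hxp.trans hyp.symm)⟩
    · exact ⟨x, hx, hxp⟩
  have hline : ∀ᶠ s in 𝓝 (0 : ℝ), p + s • (q - p) ∈ R :=
    (h𝒞.2.1 R hR).eventually_add_smul_sub_mem hpR hq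
      fun Q hQ hpQ => hmin Q (h𝒞.2.2.1 R hR Q hQ) hpQ
  obtain ⟨w, c, hFR⟩ := haff R hR
  refine mem_closure_lt_and_gt_of_eventually_affine_on_line (v := q - p) (sub_ne_zero.2 hqp) ?_
  filter_upwards [hline] with s hs
  rw [hFR _ hs, hFR p hpR, hFR q hq]
  simp only [dotProduct_add, dotProduct_smul, dotProduct_sub, smul_eq_mul]
  ring

/-- If `t` is a transversal threshold for `F` and a finite polyhedral
decomposition `𝒞` of `ℝⁿ` on whose cells `F` is affine, then the level set `F⁻¹({t})`
is the topological boundary of the sublevel set `F⁻¹((-∞,t))` and also of the superlevel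
set `F⁻¹((t,∞))`. -/
theorem level_set_eq_frontier_of_decision_regions {n : ℕ}
    (𝒞 : Set (Set (Fin n → ℝ))) (h𝒞 : IsPolyhedralComplex 𝒞)
    (hcover : ⋃₀ 𝒞 = Set.univ)
    (F : (Fin n → ℝ) → ℝ) (hF : Continuous F) (haff : AffineOnCells F 𝒞)
    (t : ℝ) (ht : TransversalThreshold F 𝒞 t) :
    F ⁻¹' {t} = frontier (F ⁻¹' Set.Iio t) ∧
    F ⁻¹' {t} = frontier (F ⁻¹' Set.Ioi t) := by
  have hclosure : ∀ p ∈ F ⁻¹' {t}, p ∈ closure (F ⁻¹' Iio t) ∧ p ∈ closure (F ⁻¹' Ioi t) := by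
    rintro p (rfl : F p = t)
    exact mem_closure_lt_and_gt_of_transversalThreshold h𝒞 haff (hcover ▸ mem_univ p) ht
  refine ⟨Subset.antisymm ?_ (frontier_Iio (a := t) ▸ hF.frontier_preimage_subset _),
    Subset.antisymm ?_ (frontier_Ioi (a := t) ▸ hF.frontier_preimage_subset _)⟩
  · intro p hp
    rw [(isOpen_Iio.preimage hF).frontier_eq]
    exact ⟨(hclosure p hp).1, fun hlt => absurd hp (ne_of_lt hlt)⟩
  · intro p hp
    rw [(isOpen_Ioi.preimage hF).frontier_eq]
    exact ⟨(hclosure p hp).2, fun hgt => absurd hp (ne_of_gt hgt)⟩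
end

section
/- Let X be an affine hyperplane in ℝⁿ and P = H_1⁺ ∩ ⋯ ∩ H_m⁺ an irredundant representation of a nonempty n-dimensional polyhedral set such that the normal vectors of H_1,…,H_m span a subspace of dimension at least 2. If X ∩ P ≠ ∅, then X intersects some facet P ∩ H_i of P. -/
/-!
If `X` missed every facet, then `X ∩ P` would lie in the open region where all constraints hold
strictly; being relatively open and closed in the connected hyperplane `X`, it would be all of `X`.
But a hyperplane contained in a half-space is parallel to its boundary, so every normal `w i` would
be a multiple of `u`, against the rank hypothesis.
-/

open Matrix

section DotProduct

variable {K ι : Type*} [Field K] [Fintype ι]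

theorem mem_span_singleton_of_forall_dotProduct_eq_zero {u w : ι → K}
    (h : ∀ v, u ⬝ᵥ v = 0 → w ⬝ᵥ v = 0) : w ∈ K ∙ u := by
  classical
  have hdual : dotProductEquiv K ι w ∈
      Submodule.span K (Set.range fun _ : Unit ↦ dotProductEquiv K ι u) :=
    mem_span_of_iInf_ker_le_ker fun v hv ↦ h v (by simpa using hv)
  rw [Set.range_const, Submodule.mem_span_singleton] at hdual
  obtain ⟨a, ha⟩ := hdual
  exact Submodule.mem_span_singleton.2 ⟨a, (dotProductEquiv K ι).injective (by simpa using ha)⟩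

variable [LinearOrder K] [IsStrictOrderedRing K]

theorem dotProduct_eq_zero_of_hyperplane_subset_halfspace {u w x₀ v : ι → K} {c b : K}
    (hx₀ : u ⬝ᵥ x₀ + c = 0) (hsub : {x | u ⬝ᵥ x + c = 0} ⊆ {x | 0 ≤ w ⬝ᵥ x + b})
    (hv : u ⬝ᵥ v = 0) : w ⬝ᵥ v = 0 := by
  by_contra hwv
  -- moving from `x₀` along `v` stays on the hyperplane but drives `w ⬝ᵥ x + b` down to `-1`
  have hmem : x₀ + (-(w ⬝ᵥ x₀ + b + 1) / w ⬝ᵥ v) • v ∈ {x | u ⬝ᵥ x + c = 0} := by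
    simp [dotProduct_add, hv, hx₀]
  have := hsub hmem
  simp only [Set.mem_ofPred_eq, dotProduct_add, dotProduct_smul, smul_eq_mul,
    div_mul_cancel₀ _ hwv] at this
  linarith

theorem mem_span_singleton_of_hyperplane_subset_halfspace {u w : ι → K} {c b : K}
    (hne : {x | u ⬝ᵥ x + c = 0}.Nonempty)
    (hsub : {x | u ⬝ᵥ x + c = 0} ⊆ {x | 0 ≤ w ⬝ᵥ x + b}) : w ∈ K ∙ u :=
  let ⟨_, hx₀⟩ := hne
  mem_span_singleton_of_forall_dotProduct_eq_zero fun _ ↦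
    dotProduct_eq_zero_of_hyperplane_subset_halfspace hx₀ hsub

end DotProduct

theorem isPreconnected_hyperplane {ι : Type*} [Fintype ι] (u : ι → ℝ) (c : ℝ) :
    IsPreconnected {x : ι → ℝ | u ⬝ᵥ x + c = 0} := by
  classical
  simp_rw [add_eq_zero_iff_eq_neg]
  exact (convex_hyperplane (dotProductEquiv ℝ ι u).isLinear _).isPreconnected

theorem hyperplane_meets_facet_general {n m : ℕ}
    (w : Fin m → (Fin n → ℝ)) (b : Fin m → ℝ)
    (P : Set (Fin n → ℝ)) (hP : P = {x | ∀ i, 0 ≤ w i ⬝ᵥ x + b i})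
    (hrank : 2 ≤ Module.finrank ℝ (Submodule.span ℝ (Set.range w)))
    (u : Fin n → ℝ) (c : ℝ) (hu : u ≠ 0)
    (X : Set (Fin n → ℝ)) (hX : X = {x | u ⬝ᵥ x + c = 0})
    (hXP : (X ∩ P).Nonempty) :
    ∃ i : Fin m, (X ∩ (P ∩ {x | w i ⬝ᵥ x + b i = 0})).Nonempty := by
  by_contra! hmiss
  set U := {x : Fin n → ℝ | ∀ i, 0 < w i ⬝ᵥ x + b i}
  have hXP_U : X ∩ P ⊆ U := by
    rintro x ⟨hxX, hxP⟩ i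
    rw [hP] at hxP
    exact (hxP i).lt_of_ne fun h ↦ (hmiss i).subset ⟨hxX, hP ▸ hxP, h.symm⟩
  have hU_open : IsOpen U := by
    simp only [U, Set.ofPred_forall]
    exact isOpen_iInter_of_finite fun i ↦ isOpen_lt continuous_const (by fun_prop)
  have hP_closed : IsClosed P := by
    rw [hP, Set.ofPred_forall]
    exact isClosed_iInter fun i ↦ isClosed_le continuous_const (by fun_prop)
  have hXU : X ⊆ U := by
    refine (hX ▸ isPreconnected_hyperplane u c).subset_of_closure_inter_subset hU_open
      (hXP.mono fun _ hx ↦ ⟨Set.mem_of_mem_inter_left hx, hXP_U hx⟩) ?_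
    rintro x ⟨hxU, hxX⟩
    exact hXP_U ⟨hxX, closure_minimal (fun y hy ↦ hP ▸ fun i ↦ (hy i).le) hP_closed hxU⟩
  have hspan : Submodule.span ℝ (Set.range w) ≤ ℝ ∙ u := by
    refine Submodule.span_le.2 ?_
    rintro _ ⟨i, rfl⟩
    exact mem_span_singleton_of_hyperplane_subset_halfspace (hX ▸ hXP.mono Set.inter_subset_left)
      fun x hx ↦ (hXU (hX ▸ hx) i).le
  have := Submodule.finrank_mono hspan
  rw [finrank_span_singleton hu] at this
  omega

/-- Let `X` be an affine hyperplane in `ℝⁿ` and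
`P = H₁⁺ ∩ ⋯ ∩ H_m⁺` an irredundant representation of a nonempty `n`-dimensional
polyhedral set whose bounding normal vectors span a subspace of dimension at least `2`.
If `X ∩ P ≠ ∅`, then `X` meets some facet `P ∩ Hᵢ` of `P`. -/
theorem hyperplane_meets_facet {n m : ℕ}
    (w : Fin m → (Fin n → ℝ)) (b : Fin m → ℝ) (hw : ∀ i, w i ≠ 0)
    (P : Set (Fin n → ℝ)) (hP : P = {x | ∀ i, 0 ≤ w i ⬝ᵥ x + b i})
    (hirr : ∀ i : Fin m, P ⊂ {x | ∀ j, j ≠ i → 0 ≤ w j ⬝ᵥ x + b j})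
    (hrank : 2 ≤ Module.finrank ℝ (Submodule.span ℝ (Set.range w)))
    (hdim : (interior P).Nonempty)
    (u : Fin n → ℝ) (c : ℝ) (hu : u ≠ 0)
    (X : Set (Fin n → ℝ)) (hX : X = {x | u ⬝ᵥ x + c = 0})
    (hXP : (X ∩ P).Nonempty) :
    ∃ i : Fin m, (X ∩ (P ∩ {x | w i ⬝ᵥ x + b i = 0})).Nonempty :=
  hyperplane_meets_facet_general w b P hP hrank u c hu X hX hXP
end

section
/- Let N = F_m ∘ ⋯ ∘ F_1: ℝⁿ → ℝⁿ be a composition of ReLU layer maps F_i = σ ∘ A_i with all layers of width n, and suppose at least one affine map A_i is non-invertible. Then for every point q in the image of N, the preimage N⁻¹({q}) is unbounded. -/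
open Matrix

/-- The composition of the first `k` ReLU layer maps of a feedforward network with layer
dimensions `d 0, d 1, d 2, …`, weight matrices `W` and biases `b`. -/
def forward (d : ℕ → ℕ) (W : ∀ k, Matrix (Fin (d (k + 1))) (Fin (d k)) ℝ)
    (b : ∀ k, Fin (d (k + 1)) → ℝ) : (k : ℕ) → (Fin (d 0) → ℝ) → Fin (d k) → ℝ
  | 0, x => x
  | k + 1, x => fun i => max ((W k).mulVec (forward d W b k x) i + b k i) 0

/-!
The ReLU `σ` is `posPart`, `x ↦ x⁺`, on `Fin n → ℝ`. Induct on the depth, peeling off the first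
layer `x ↦ σ (W₀ x + b₀)`. If `W₀` is singular, the fibre through `x` contains the line through `x`
along a kernel vector of `W₀`. Otherwise the fibre through `x` is the preimage, under an affine
homeomorphism and then under `σ`, of a fibre of the shorter network, so it suffices that unbounded
path components survive both pullbacks. A homeomorphism of `ℝⁿ` maps bounded sets to bounded sets.
For `σ`, the path component of `σ w` either lies in the closed orthant, where `σ` is the identity,
or leaves it through a boundary point `p`, whose fibre `σ⁻¹ {p}` contains a ray. As `σ` has convex
fibres, the preimage of a path-connected part of the orthant is path-connected, which carries the
unboundedness back to the path component of `w`.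
-/

open Set Bornology

theorem IsPathConnected.exists_isPathConnected_subset_inter_frontier {X : Type*}
    [TopologicalSpace X] {C s : Set X} {x : X} (hC : IsPathConnected C) (hs : IsClosed s)
    (hxC : x ∈ C) (hxs : x ∈ s) (hCs : ¬C ⊆ s) :
    ∃ K ⊆ C ∩ s, x ∈ K ∧ IsPathConnected K ∧ (K ∩ frontier s).Nonempty := by
  obtain ⟨y, hyC, hys⟩ := not_subset.1 hCs
  let γ := (hC.joinedIn x hxC y hyC).somePath
  have hγC : ∀ t, γ.extend t ∈ C := fun t => by
    obtain ⟨u, hu⟩ : γ.extend t ∈ range γ := γ.extend_range ▸ mem_range_self t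
    exact hu ▸ (hC.joinedIn x hxC y hyC).somePath_mem u
  -- `t₁` is the first time at which the path meets the closure of `sᶜ`
  let Z := Icc (0 : ℝ) 1 ∩ γ.extend ⁻¹' closure sᶜ
  have hZ : IsClosed Z := isClosed_Icc.inter (isClosed_closure.preimage γ.continuous_extend)
  have h1Z : (1 : ℝ) ∈ Z := ⟨right_mem_Icc.2 zero_le_one, by
    rw [mem_preimage, γ.extend_one]; exact subset_closure hys⟩
  have hZ0 : BddBelow Z := ⟨0, fun t ht => ht.1.1⟩
  set t₁ := sInf Z
  have ht₁ : t₁ ∈ Z := hZ.csInf_mem ⟨1, h1Z⟩ hZ0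
  have hIco : MapsTo γ.extend (Ico 0 t₁) s := fun t ht => by
    by_contra hts
    exact (csInf_le hZ0 ⟨⟨ht.1, ht.2.le.trans ht₁.1.2⟩, subset_closure hts⟩).not_gt ht.2
  have hIcc : MapsTo γ.extend (Icc 0 t₁) s := by
    rcases eq_or_ne 0 t₁ with h | h
    · rw [← h, Icc_self, mapsTo_singleton, γ.extend_zero]; exact hxs
    · rw [← closure_Ico h, ← hs.closure_eq]; exact hIco.closure γ.continuous_extend
  refine ⟨γ.extend '' Icc 0 t₁, image_subset_iff.2 fun t ht => ⟨hγC t, hIcc ht⟩,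
    ⟨0, left_mem_Icc.2 ht₁.1.1, γ.extend_zero⟩,
    ((convex_Icc 0 t₁).isPathConnected (nonempty_Icc.2 ht₁.1.1)).image γ.continuous_extend,
    γ.extend t₁, mem_image_of_mem _ (right_mem_Icc.2 ht₁.1.1), ?_⟩
  rw [frontier_eq_closure_inter_closure]
  exact ⟨subset_closure (hIcc (right_mem_Icc.2 ht₁.1.1)), ht₁.2⟩

theorem Homeomorph.not_isBounded_pathComponentIn_preimage {X Y : Type*} [PseudoMetricSpace X]
    [ProperSpace X] [PseudoMetricSpace Y] (e : X ≃ₜ Y) {T : Set Y} {x : X}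
    (hT : ¬IsBounded (pathComponentIn T (e x))) : ¬IsBounded (pathComponentIn (e ⁻¹' T) x) := by
  have hx : e x ∈ T := pathComponentIn_nonempty_iff.1 (nonempty_of_not_isBounded hT)
  intro h
  have hsub : e.symm '' pathComponentIn T (e x) ⊆ pathComponentIn (e ⁻¹' T) x :=
    ((isPathConnected_pathComponentIn hx).image e.symm.continuous).subset_pathComponentIn
      ⟨e x, mem_pathComponentIn_self hx, e.symm_apply_apply x⟩
      (image_subset_iff.2 fun y hy => by simpa using pathComponentIn_subset hy)
  refine hT ?_
  rw [← e.image_symm_image (pathComponentIn T (e x))]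
  exact ((h.subset hsub).isCompact_closure.image e.continuous).isBounded.subset
    (image_mono subset_closure)

theorem not_isBounded_range_lineMap {E : Type*} [NormedAddCommGroup E] [NormedSpace ℝ E]
    {x y : E} (h : x ≠ y) : ¬IsBounded (range (AffineMap.lineMap x y : ℝ → E)) := fun hb =>
  NormedSpace.unbounded_univ ℝ ℝ <| by
    simpa using (antilipschitzWith_lineMap (𝕜 := ℝ) h).isBounded_preimage hb

section PosPart

variable {ι : Type*}

theorem convex_setOf_posPart_eq (c : ι → ℝ) : Convex ℝ {z : ι → ℝ | z⁺ = c} := by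
  have hcoord : ∀ i, Convex ℝ {a : ℝ | a⁺ = c i} := fun i =>
    Set.OrdConnected.convex ⟨fun a ha b hb x hx => le_antisymm
      (hb ▸ posPart_mono hx.2) (ha ▸ posPart_mono hx.1)⟩
  simpa [Set.pi, funext_iff] using convex_pi (s := univ) fun i _ => hcoord i

theorem subset_preimage_posPart {K : Set (ι → ℝ)} (hK0 : K ⊆ Ici 0) : K ⊆ (·⁺) ⁻¹' K :=
  fun z hz => by rw [mem_preimage, posPart_eq_self.2 (hK0 hz)]; exact hz

theorem IsPathConnected.preimage_posPart {K : Set (ι → ℝ)} (hK : IsPathConnected K)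
    (hK0 : K ⊆ Ici 0) : IsPathConnected ((·⁺) ⁻¹' K) := by
  have hKsub := subset_preimage_posPart hK0
  obtain ⟨x, hx, hxK⟩ := hK
  refine ⟨x, hKsub hx, fun {z} hz => ?_⟩
  have hfiber : JoinedIn ((·⁺) ⁻¹' K) z⁺ z := by
    refine ((convex_setOf_posPart_eq z⁺).isPathConnected ⟨z, rfl⟩).joinedIn _ ?_ _ rfl
      |>.mono fun u hu => ?_
    · exact posPart_eq_self.2 (posPart_nonneg z)
    · rw [mem_preimage, hu]; exact hz
  exact ((hxK hz).mono hKsub).trans hfiber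

variable [Fintype ι]

theorem not_isBounded_setOf_posPart_eq {p : ι → ℝ} (hp : p ∈ frontier (Ici 0)) :
    ¬IsBounded {z : ι → ℝ | z⁺ = p} := by
  classical
  have hp0 : 0 ≤ p := isClosed_Ici.frontier_subset hp
  obtain ⟨i, hi⟩ : ∃ i, p i = 0 := by
    by_contra! h
    refine hp.2 (interior_maximal (t := pi univ fun _ => Ioi 0)
      (fun z hz i => le_of_lt (hz i (mem_univ i)))
      (isOpen_set_pi finite_univ fun _ _ => isOpen_Ioi) ?_)
    exact fun j _ => (hp0 j).lt_of_ne' (h j)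
  intro hbdd
  obtain ⟨R, hR⟩ := hbdd.exists_norm_le
  have hmem : Function.update p i (-(|R| + 1)) ∈ {z : ι → ℝ | z⁺ = p} := by
    ext j
    rcases eq_or_ne j i with rfl | hj
    · simp only [Pi.posPart_apply, Function.update_self, hi, posPart_eq_zero]
      linarith [abs_nonneg R]
    · simp [hj, posPart_eq_self.2 (hp0 j)]
  have := (norm_le_pi_norm _ i).trans (hR _ hmem)
  simp only [Function.update_self, Real.norm_eq_abs] at this
  linarith [neg_le_abs (-(|R| + 1)), le_abs_self R]

theorem not_isBounded_pathComponentIn_preimage_posPart {T : Set (ι → ℝ)} {w : ι → ℝ}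
    (hT : ¬IsBounded (pathComponentIn T w⁺)) : ¬IsBounded (pathComponentIn ((·⁺) ⁻¹' T) w) := by
  have hw : w⁺ ∈ T := pathComponentIn_nonempty_iff.1 (nonempty_of_not_isBounded hT)
  have hC := isPathConnected_pathComponentIn hw
  obtain ⟨K, hKT, hwK, hK, hKunb⟩ : ∃ K ⊆ T ∩ Ici 0,
      w⁺ ∈ K ∧ IsPathConnected K ∧ ¬IsBounded ((·⁺) ⁻¹' K) := by
    by_cases hCP : pathComponentIn T w⁺ ⊆ Ici 0
    · exact ⟨_, subset_inter pathComponentIn_subset hCP, mem_pathComponentIn_self hw, hC,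
        fun h => hT (h.subset (subset_preimage_posPart hCP))⟩
    · obtain ⟨K, hKC, hwK, hK, p, hpK, hp⟩ := hC.exists_isPathConnected_subset_inter_frontier
        isClosed_Ici (mem_pathComponentIn_self hw) (posPart_nonneg w) hCP
      refine ⟨K, hKC.trans (inter_subset_inter_left _ pathComponentIn_subset), hwK, hK,
        fun h => not_isBounded_setOf_posPart_eq hp (h.subset fun z hz => ?_)⟩
      rw [mem_preimage, show z⁺ = p from hz]
      exact hpK
  refine fun h => hKunb (h.subset ((hK.preimage_posPart (hKT.trans inter_subset_right))
    |>.subset_pathComponentIn hwK (preimage_mono (hKT.trans inter_subset_left))))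

end PosPart

noncomputable def Matrix.affineHomeomorph {ι : Type*} [Fintype ι] [DecidableEq ι]
    (A : Matrix ι ι ℝ) (hA : IsUnit A.det) (c : ι → ℝ) : (ι → ℝ) ≃ₜ (ι → ℝ) where
  toFun x := A *ᵥ x + c
  invFun y := A⁻¹ *ᵥ (y - c)
  left_inv x := by simp [mulVec_mulVec, nonsing_inv_mul _ hA]
  right_inv y := by simp [mulVec_mulVec, mul_nonsing_inv _ hA]
  continuous_toFun := (continuous_const.matrix_mulVec continuous_id).add continuous_const
  continuous_invFun := continuous_const.matrix_mulVec (continuous_id.sub continuous_const)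

theorem forward_succ_eq_forward_shift {n : ℕ} (W : ℕ → Matrix (Fin n) (Fin n) ℝ)
    (b : ℕ → Fin n → ℝ) (k : ℕ) (x : Fin n → ℝ) :
    forward (fun _ => n) W b (k + 1) x =
      forward (fun _ => n) (fun j => W (j + 1)) (fun j => b (j + 1)) k (W 0 *ᵥ x + b 0)⁺ := by
  induction k with
  | zero => rfl
  | succ k ih => exact congrArg (fun y => (W (k + 1) *ᵥ y + b (k + 1))⁺) ih

theorem not_isBounded_pathComponentIn_forward_fiber {n : ℕ} (k : ℕ)
    (W : ℕ → Matrix (Fin n) (Fin n) ℝ) (b : ℕ → Fin n → ℝ) (hsing : ∃ i < k, (W i).det = 0)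
    (x : Fin n → ℝ) :
    ¬IsBounded (pathComponentIn
      (forward (fun _ => n) W b k ⁻¹' {forward (fun _ => n) W b k x}) x) := by
  induction k generalizing W b x with
  | zero => simp at hsing
  | succ k ih =>
    by_cases h0 : (W 0).det = 0
    · obtain ⟨v, hv, hWv⟩ := Matrix.exists_mulVec_eq_zero_iff.2 h0
      refine fun h => not_isBounded_range_lineMap (x := x) (y := x + v) (by simpa using hv)
        (h.subset ?_)
      refine (isPathConnected_range AffineMap.lineMap_continuous).subset_pathComponentIn
        ⟨0, AffineMap.lineMap_apply_zero x _⟩ ?_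
      rintro _ ⟨t, rfl⟩
      simp [forward_succ_eq_forward_shift, AffineMap.lineMap_apply, mulVec_add, mulVec_smul, hWv]
    · have hsing' : ∃ i < k, (W (i + 1)).det = 0 := by
        obtain ⟨_ | i, hi, hdet⟩ := hsing
        · exact absurd hdet h0
        · exact ⟨i, by omega, hdet⟩
      set F := forward (fun _ => n) (fun j => W (j + 1)) (fun j => b (j + 1)) k
      set e := (W 0).affineHomeomorph (isUnit_iff_ne_zero.2 h0) (b 0)
      have hfiber : forward (fun _ => n) W b (k + 1) ⁻¹' {forward (fun _ => n) W b (k + 1) x} =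
          e ⁻¹' ((·⁺) ⁻¹' (F ⁻¹' {F (e x)⁺})) := by
        ext z
        simp only [mem_preimage, mem_singleton_iff, forward_succ_eq_forward_shift]
        rfl
      rw [hfiber]
      exact e.not_isBounded_pathComponentIn_preimage
        (not_isBounded_pathComponentIn_preimage_posPart (ih _ _ hsing' _))

/-- Let `N = F_m ∘ ⋯ ∘ F₁ : ℝⁿ → ℝⁿ` be a composition of ReLU layer
maps `F_i = σ ∘ A_i`, all of width `n`, and suppose some weight matrix `W_i` (with
`i < m`) is singular (so `A_i` is non-invertible). Then every point of the image of `N`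
has unbounded preimage. -/
theorem singular_layer_unbounded_fibers {n : ℕ} (m : ℕ)
    (W : ℕ → Matrix (Fin n) (Fin n) ℝ) (b : ℕ → Fin n → ℝ)
    (hsing : ∃ i, i < m ∧ (W i).det = 0)
    (N : (Fin n → ℝ) → (Fin n → ℝ))
    (hN : N = forward (fun _ => n) W b m) :
    ∀ q ∈ Set.range N, ¬ Bornology.IsBounded (N ⁻¹' {q}) := by
  rintro _ ⟨x, rfl⟩ h
  subst hN
  exact not_isBounded_pathComponentIn_forward_fiber m W b hsing x (h.subset pathComponentIn_subset)
end

section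
/- Let F: ℝ² → ℝ be continuous and affine on cells of a finite polyhedral decomposition M of ℝ², let t be a transversal threshold (F is nonconstant on every cell meeting F⁻¹({t})), and let S be a bounded connected component of the superlevel set F⁻¹((t,∞)). Then the maximum of F over the closure of S is attained, is strictly greater than t, and every point attaining this maximum lies in S (not on ∂S); moreover, the set of maximizers contains a cell of M of dimension at most 1 (a vertex or edge of the 1-skeleton). -/
open Matrix

/-- The dot product with a fixed vector as a linear map. -/
def dotLin {n : ℕ} (w : Fin n → ℝ) : (Fin n → ℝ) →ₗ[ℝ] ℝ where
  toFun x := w ⬝ᵥ x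
  map_add' x y := dotProduct_add w x y
  map_smul' r x := by simp [dotProduct_smul, smul_eq_mul]

lemma continuous_dot {n : ℕ} (w : Fin n → ℝ) : Continuous fun x : Fin n → ℝ => w ⬝ᵥ x :=
  (dotLin w).continuous_of_finiteDimensional

lemma isLinearMap_dot {n : ℕ} (w : Fin n → ℝ) : IsLinearMap ℝ fun x : Fin n → ℝ => w ⬝ᵥ x :=
  ⟨fun a b => dotProduct_add w a b, fun r a => dotProduct_smul r w a⟩

lemma IsPolyhedral.convex {n : ℕ} {P : Set (Fin n → ℝ)} (h : IsPolyhedral P) :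
    Convex ℝ P := by
  obtain ⟨k, w, c, rfl⟩ := h
  intro x hx y hy a b ha hb hab j
  have hx' := hx j
  have hy' := hy j
  have : w j ⬝ᵥ (a • x + b • y) = a * (w j ⬝ᵥ x) + b * (w j ⬝ᵥ y) := by
    simp [dotProduct_add, dotProduct_smul, smul_eq_mul]
  have h3 : c j = a * c j + b * c j := by rw [← add_mul, hab, one_mul]
  nlinarith [mul_le_mul_of_nonneg_left hx' ha, mul_le_mul_of_nonneg_left hy' hb]

lemma IsPolyhedral.isClosed {n : ℕ} {P : Set (Fin n → ℝ)} (h : IsPolyhedral P) :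
    IsClosed P := by
  obtain ⟨k, w, c, rfl⟩ := h
  have : {x : Fin n → ℝ | ∀ j, c j ≤ w j ⬝ᵥ x} = ⋂ j, {x | c j ≤ w j ⬝ᵥ x} := by
    ext x; simp
  rw [this]
  exact isClosed_iInter fun j => isClosed_le continuous_const (continuous_dot (w j))

/-- A set on which a nonzero linear functional is constant spans an affine subspace
of dimension at most `1` (in `ℝ²`). -/
lemma dim_le_one (w : Fin 2 → ℝ) (hw : w ≠ 0) (c₀ : ℝ) (Q : Set (Fin 2 → ℝ))
    (hQ : ∀ y ∈ Q, w ⬝ᵥ y = c₀) :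
    Module.finrank ℝ (affineSpan ℝ Q).direction ≤ 1 := by
  rw [direction_affineSpan]
  have hsub : vectorSpan ℝ Q ≤ LinearMap.ker (dotLin w) := by
    rw [vectorSpan_def]
    apply Submodule.span_le.2
    rintro v hv
    rw [Set.mem_vsub] at hv
    obtain ⟨a, ha, b, hb, rfl⟩ := hv
    have : dotLin w (a -ᵥ b) = 0 := by
      simp only [vsub_eq_sub, map_sub]
      show w ⬝ᵥ a - w ⬝ᵥ b = 0
      rw [hQ a ha, hQ b hb, sub_self]
    simpa [LinearMap.mem_ker] using this
  have hker : Module.finrank ℝ (LinearMap.ker (dotLin w)) ≤ 1 := by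
    have hrn := (dotLin w).finrank_range_add_finrank_ker
    rw [Module.finrank_fin_fun] at hrn
    have hrange : Module.finrank ℝ (LinearMap.range (dotLin w)) ≠ 0 := by
      rw [Ne, Submodule.finrank_eq_zero, LinearMap.range_eq_bot]
      intro h0
      obtain ⟨i, hi⟩ : ∃ i, w i ≠ 0 := by
        by_contra hc; push_neg at hc; exact hw (funext hc)
      have := congrFun (congrArg DFunLike.coe h0) (Pi.single i 1)
      simp only [LinearMap.zero_apply] at this
      rw [show dotLin w (Pi.single i 1) = w ⬝ᵥ Pi.single i 1 from rfl] at this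
      rw [dotProduct_single, mul_one] at this
      exact hi this
    omega
  exact le_trans (Submodule.finrank_mono hsub) hker

/-- Let `F : ℝ² → ℝ` be continuous and affine on cells of a finite
polyhedral decomposition `𝒞` of `ℝ²`, let `t` be a transversal threshold, and let `S`
be a bounded connected component of the superlevel set `F⁻¹((t,∞))`.  Then the maximum
of `F` over the closure of `S` is attained, is strictly greater than `t`, every
maximizer lies in `S` (not on `∂S`), and the set of maximizers contains a nonempty cell
of `𝒞` of dimension at most `1` (a vertex or edge of the `1`-skeleton). -/
theorem bounded_component_max_on_low_dim_cell
    (𝒞 : Set (Set (Fin 2 → ℝ))) (h𝒞 : IsPolyhedralComplex 𝒞)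
    (hcover : ⋃₀ 𝒞 = Set.univ)
    (F : (Fin 2 → ℝ) → ℝ) (hF : Continuous F) (haff : AffineOnCells F 𝒞)
    (t : ℝ) (ht : TransversalThreshold F 𝒞 t)
    (x₀ : Fin 2 → ℝ) (hx₀ : t < F x₀)
    (S : Set (Fin 2 → ℝ)) (hS : S = connectedComponentIn (F ⁻¹' Set.Ioi t) x₀)
    (hbd : Bornology.IsBounded S) :
    (∃ x ∈ closure S, ∀ y ∈ closure S, F y ≤ F x) ∧
    (∀ x ∈ closure S, (∀ y ∈ closure S, F y ≤ F x) → t < F x ∧ x ∈ S) ∧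
    (∃ C ∈ 𝒞, C.Nonempty ∧ Module.finrank ℝ (affineSpan ℝ C).direction ≤ 1 ∧
      C ⊆ {x ∈ closure S | ∀ y ∈ closure S, F y ≤ F x}) := by
  set U := F ⁻¹' Set.Ioi t with hU
  have hUopen : IsOpen U := isOpen_Ioi.preimage hF
  have hx₀U : x₀ ∈ U := hx₀
  have hx₀S : x₀ ∈ S := hS ▸ mem_connectedComponentIn hx₀U
  have hSopen : IsOpen S := hS ▸ hUopen.connectedComponentIn
  have hScomp : IsCompact (closure S) :=
    Metric.isCompact_of_isClosed_isBounded isClosed_closure hbd.closure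
  have hne : (closure S).Nonempty := ⟨x₀, subset_closure hx₀S⟩
  obtain ⟨xm, hxm, hmaxOn⟩ := hScomp.exists_isMaxOn hne hF.continuousOn
  have hmax : ∀ y ∈ closure S, F y ≤ F xm := fun y hy => hmaxOn hy
  -- Part 2
  have part2 : ∀ x ∈ closure S, (∀ y ∈ closure S, F y ≤ F x) → t < F x ∧ x ∈ S := by
    intro x hx hmx
    have htx : t < F x := lt_of_lt_of_le hx₀ (hmx x₀ (subset_closure hx₀S))
    have hxU : x ∈ U := htx
    have hopen' : IsOpen (connectedComponentIn U x) := hUopen.connectedComponentIn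
    have hxin : x ∈ connectedComponentIn U x := mem_connectedComponentIn hxU
    obtain ⟨z, hz1, hz2⟩ : (connectedComponentIn U x ∩ S).Nonempty :=
      mem_closure_iff.mp hx _ hopen' hxin
    have h1 : connectedComponentIn U x = connectedComponentIn U z :=
      connectedComponentIn_eq hz1
    have h2 : S = connectedComponentIn U z :=
      hS.trans (connectedComponentIn_eq (hS ▸ hz2))
    exact ⟨htx, by rw [h2, ← h1]; exact hxin⟩
  refine ⟨⟨xm, hxm, hmax⟩, part2, ?_⟩
  obtain ⟨htm, hxmS⟩ := part2 xm hxm hmax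
  -- a cell containing the maximizer
  obtain ⟨P, hP𝒞, hxP⟩ : ∃ P ∈ 𝒞, xm ∈ P := by
    have : xm ∈ ⋃₀ 𝒞 := hcover ▸ Set.mem_univ xm
    exact this
  obtain ⟨w, c, hwc⟩ := haff P hP𝒞
  have hPpoly := h𝒞.2.1 P hP𝒞
  have hPconv : Convex ℝ P := hPpoly.convex
  -- the affine functional is maximized over P at xm
  have claimA : ∀ y ∈ P, w ⬝ᵥ y ≤ w ⬝ᵥ xm := by
    by_contra h
    push_neg at h
    obtain ⟨y, hyP, hgt⟩ := h
    obtain ⟨ε, hε, hball⟩ := Metric.isOpen_iff.mp hSopen xm hxmS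
    have hyx : y ≠ xm := by
      intro h; rw [h] at hgt; exact lt_irrefl _ hgt
    have hd : (0:ℝ) < ‖y - xm‖ := by
      rw [norm_pos_iff]; exact sub_ne_zero_of_ne hyx
    set s : ℝ := min (1/2) (ε / (2 * ‖y - xm‖)) with hsdef
    have hs0 : 0 < s := lt_min (by norm_num) (div_pos hε (by linarith))
    have hs1 : s ≤ 1/2 := min_le_left _ _
    set z : Fin 2 → ℝ := (1 - s) • xm + s • y with hzdef
    have hzP : z ∈ P := hPconv hxP hyP (by linarith) (le_of_lt hs0) (by ring)
    have hzball : z ∈ Metric.ball xm ε := by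
      have hzx : z - xm = s • (y - xm) := by
        rw [hzdef]; module
      rw [Metric.mem_ball, dist_eq_norm, hzx, norm_smul, Real.norm_eq_abs,
        abs_of_pos hs0]
      have hle : s ≤ ε / (2 * ‖y - xm‖) := min_le_right _ _
      have : s * ‖y - xm‖ ≤ (ε / (2 * ‖y - xm‖)) * ‖y - xm‖ :=
        mul_le_mul_of_nonneg_right hle (le_of_lt hd)
      have heq : (ε / (2 * ‖y - xm‖)) * ‖y - xm‖ = ε / 2 := by
        field_simp
      rw [heq] at this
      linarith
    have hzS : z ∈ closure S := subset_closure (hball hzball)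
    have hle : F z ≤ F xm := hmax z hzS
    have hFz : F z = w ⬝ᵥ z + c := hwc z hzP
    have hFx : F xm = w ⬝ᵥ xm + c := hwc xm hxP
    have hdot : w ⬝ᵥ z = (1 - s) * (w ⬝ᵥ xm) + s * (w ⬝ᵥ y) := by
      rw [hzdef]; simp [dotProduct_add, dotProduct_smul, smul_eq_mul]
    rw [hFz, hFx, hdot] at hle
    nlinarith [mul_pos hs0 (sub_pos.mpr hgt)]
  -- the face where the affine functional attains its max over P
  set Q : Set (Fin 2 → ℝ) := P ∩ {y | w ⬝ᵥ y = w ⬝ᵥ xm} with hQdef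
  have hQ𝒞 : Q ∈ 𝒞 := h𝒞.2.2.1 P hP𝒞 Q (Or.inr ⟨w, w ⬝ᵥ xm, claimA, rfl⟩)
  have hxQ : xm ∈ Q := ⟨hxP, rfl⟩
  have hQF : ∀ y ∈ Q, F y = F xm := by
    rintro y ⟨hyP, hye⟩
    rw [hwc y hyP, hwc xm hxP, hye]
  have hQconv : Convex ℝ Q :=
    hPconv.inter (convex_hyperplane (isLinearMap_dot w) _)
  have hQS : Q ⊆ S := by
    have hQU : Q ⊆ U := fun y hy => show t < F y by rw [hQF y hy]; exact htm
    have hsub : Q ⊆ connectedComponentIn U xm :=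
      hQconv.isPreconnected.subset_connectedComponentIn hxQ hQU
    have : S = connectedComponentIn U xm :=
      hS.trans (connectedComponentIn_eq (hS ▸ hxmS))
    rw [this]; exact hsub
  have hQK : Q ⊆ {x ∈ closure S | ∀ y ∈ closure S, F y ≤ F x} := by
    intro y hy
    exact ⟨subset_closure (hQS hy), fun z hz => by rw [hQF y hy]; exact hmax z hz⟩
  -- Q is compact
  have hQclosed : IsClosed Q :=
    hPpoly.isClosed.inter (isClosed_eq (continuous_dot w) continuous_const)
  have hQcomp : IsCompact Q :=
    Metric.isCompact_of_isClosed_isBounded hQclosed (hbd.subset hQS)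
  -- maximize a fixed nonzero functional over Q to get a low-dimensional face
  set v : Fin 2 → ℝ := fun _ => 1 with hvdef
  have hv : v ≠ 0 := by
    intro h
    have := congrFun h 0
    simp [hvdef] at this
  obtain ⟨zm, hzmQ, hzmax⟩ :=
    hQcomp.exists_isMaxOn ⟨xm, hxQ⟩ (continuous_dot v).continuousOn
  set Q' : Set (Fin 2 → ℝ) := Q ∩ {y | v ⬝ᵥ y = v ⬝ᵥ zm} with hQ'def
  have hQ'𝒞 : Q' ∈ 𝒞 :=
    h𝒞.2.2.1 Q hQ𝒞 Q' (Or.inr ⟨v, v ⬝ᵥ zm, fun y hy => hzmax hy, rfl⟩)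
  refine ⟨Q', hQ'𝒞, ⟨zm, hzmQ, rfl⟩, ?_, fun y hy => hQK hy.1⟩
  exact dim_le_one v hv (v ⬝ᵥ zm) Q' fun y hy => hy.2
end
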